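/- Let G = (V,E) be a finite simple graph with a vertex s of degree exactly 3 whose three incident edges are {s,i}, {s,j}, {s,k}, and suppose {i,j} ∉ E. Define G' = (V,E') with E' = (E ∪ {{i,j}}) \ {{s,i},{s,j},{s,k}}. Then the generic stress numbers satisfy s(G) ≤ s(G'). -/

import Mathlib

noncomputable section

open Classical in
/-- The edge vector of the pair `(i, j)` under the realization `p`: the function `V → ℝ × ℝ`
whose value is `p i - p j` at `i`, `p j - p i` at `j`, and `0` elsewhere. -/
def edgeVec {V : Type*} (p : V → ℝ × ℝ) (i j : V) : V → ℝ × ℝ :=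
  fun v => if v = i then p i - p j else if v = j then p j - p i else 0

/-- The set of edge vectors of a set `F` of (potential) edges under the realization `p`. -/
def edgeVecs {V : Type*} (p : V → ℝ × ℝ) (F : Set (Sym2 V)) : Set (V → ℝ × ℝ) :=
  {x | ∃ i j, s(i, j) ∈ F ∧ x = edgeVec p i j}

/-- The rank of the edge vectors of `F` under the realization `p`. -/
def rankOf {V : Type*} (p : V → ℝ × ℝ) (F : Set (Sym2 V)) : ℕ :=
  Module.finrank ℝ (Submodule.span ℝ (edgeVecs p F))

/-- The generic rank of a set of edges: the maximum over all realizations `p` of the rank. -/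
def genRankSet {V : Type*} (F : Set (Sym2 V)) : ℕ :=
  ⨆ p : V → ℝ × ℝ, rankOf p F

/-- The generic rank `r(G)` of a graph. -/
def genRank {V : Type*} (G : SimpleGraph V) : ℕ := genRankSet G.edgeSet

/-- The stress number `s_p(F)` of a set of edges under the realization `p`
(the dimension of the space of resolvable stresses). -/
def stressNum {V : Type*} (p : V → ℝ × ℝ) (F : Set (Sym2 V)) : ℕ :=
  F.ncard - rankOf p F

/-- The generic stress number `s(F)` of a set of edges. -/
def genStressSet {V : Type*} (F : Set (Sym2 V)) : ℕ := F.ncard - genRankSet F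

/-- The generic stress number `s(G)` of a graph. -/
def genStress {V : Type*} (G : SimpleGraph V) : ℕ := G.edgeSet.ncard - genRank G

/-- A planar configuration is in general position if it is injective and no three distinct
vertices have collinear images. -/
def GeneralPosition {V : Type*} (p : V → ℝ × ℝ) : Prop :=
  Function.Injective p ∧
    ∀ i j k : V, i ≠ j → j ≠ k → i ≠ k →
      ¬ Collinear ℝ ({p i, p j, p k} : Set (ℝ × ℝ))

/-- `W_U`: the subspace of functions `V → ℝ × ℝ` vanishing at every vertex outside `U`. -/
def vanishOn {V : Type*} (U : Set V) : Submodule ℝ (V → ℝ × ℝ) where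
  carrier := {f | ∀ v ∉ U, f v = 0}
  zero_mem' := fun v _ => rfl
  add_mem' := by
    intro a b ha hb v hv
    simp [Pi.add_apply, ha v hv, hb v hv]
  smul_mem' := by
    intro c f hf v hv
    simp [Pi.smul_apply, hf v hv]

end

/-!
Take a realization `p` that is generic for `E'` and in which `p i, p j, p k` are not collinear,
and put `w` at the midpoint of `p i` and `p j`. Then `2 (v_{wi} + v_{wj}) = v_{ij}`, so the edge
vectors of `G` span all edge vectors of `E'`. These vanish at `w`, whereas `v_{wi}` and `v_{wk}`
take linearly independent values there, so the span grows by at least 2: `r(G) ≥ r(G') + 2`,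
while `|E| = |E'| + 2`. A generic `p` with `p i, p j, p k` non-collinear exists because the rank
is lower semicontinuous in the realization, and along a line of realizations the three points are
collinear only at the finitely many roots of a nonzero quadratic.
-/

open Module Submodule Topology

lemma finrank_add_finrank_map_le {K E F : Type*} [Field K] [AddCommGroup E] [Module K E]
    [FiniteDimensional K E] [AddCommGroup F] [Module K F] (f : E →ₗ[K] F)
    {W M : Submodule K E} (hWM : W ≤ M) (hWf : W ≤ LinearMap.ker f) :
    finrank K W + finrank K (M.map f) ≤ finrank K M := by
  have := LinearMap.finrank_range_add_finrank_ker (f.domRestrict M)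
  rw [LinearMap.range_domRestrict, LinearMap.ker_domRestrict] at this
  have hle : finrank K W ≤ finrank K ((LinearMap.ker f).comap M.subtype) := by
    rw [← (comapSubtypeEquivOfLe hWM).finrank_eq]
    exact finrank_mono (comap_mono hWf)
  omega

def cross (a b : ℝ × ℝ) : ℝ := a.1 * b.2 - a.2 * b.1

lemma linearIndependent_pair_of_cross_ne_zero {a b : ℝ × ℝ} (h : cross a b ≠ 0) :
    LinearIndependent ℝ ![a, b] := by
  rw [LinearIndependent.pair_iff]
  intro s t hst
  have h1 : s * a.1 + t * b.1 = 0 := by simpa using congrArg Prod.fst hst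
  have h2 : s * a.2 + t * b.2 = 0 := by simpa using congrArg Prod.snd hst
  have hs : s * cross a b = 0 := by unfold cross; linear_combination b.2 * h1 - b.1 * h2
  have ht : t * cross a b = 0 := by unfold cross; linear_combination a.1 * h2 - a.2 * h1
  exact ⟨(mul_eq_zero.1 hs).resolve_right h, (mul_eq_zero.1 ht).resolve_right h⟩

open Polynomial in
lemma finite_setOf_cross_add_smul_eq_zero {a b c d : ℝ × ℝ} (h : cross c d ≠ 0) :
    {t : ℝ | cross (a + t • c) (b + t • d) = 0}.Finite := by
  set P : ℝ[X] := C (cross a b) + C (cross a d + cross c b) * X + C (cross c d) * X ^ 2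
  have hP : P ≠ 0 := fun hP => h (by simpa [P] using congrArg (coeff · 2) hP)
  refine (P.finite_setOfPred_isRoot hP).subset fun t ht => ?_
  simp only [Set.mem_ofPred_eq, cross, Prod.fst_add, Prod.snd_add, Prod.smul_fst, Prod.smul_snd,
    smul_eq_mul] at ht
  simp only [Set.mem_ofPred_eq, IsRoot, P, eval_add, eval_mul, eval_C, eval_X, eval_pow, cross]
  linear_combination ht

lemma cross_midpoint_sub_midpoint_sub (a b c : ℝ × ℝ) :
    cross (midpoint ℝ a b - a) (midpoint ℝ a b - c) = -cross (b - a) (c - a) / 2 := by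
  simp only [cross, midpoint_eq_smul_add, invOf_eq_inv, Prod.fst_sub, Prod.snd_sub, Prod.smul_fst,
    Prod.smul_snd, Prod.fst_add, Prod.snd_add, smul_eq_mul]
  ring

section EdgeVectors

variable {V : Type*}

lemma edgeVec_apply_of_notMem {p : V → ℝ × ℝ} {a b v : V} (hv : v ∉ s(a, b)) :
    edgeVec p a b v = 0 := by
  rw [Sym2.mem_iff, not_or] at hv
  simp [edgeVec, hv.1, hv.2]

lemma edgeVec_comm (p : V → ℝ × ℝ) (a b : V) : edgeVec p b a = edgeVec p a b := by
  funext v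
  by_cases hva : v = a <;> by_cases hvb : v = b <;> simp_all [edgeVec]

lemma edgeVec_update_of_notMem [DecidableEq V] (p : V → ℝ × ℝ) {a b w : V} (x : ℝ × ℝ)
    (hw : w ∉ s(a, b)) : edgeVec (Function.update p w x) a b = edgeVec p a b := by
  rw [Sym2.mem_iff, not_or] at hw
  unfold edgeVec
  rw [Function.update_of_ne (Ne.symm hw.1), Function.update_of_ne (Ne.symm hw.2)]

lemma continuous_edgeVec [Fintype V] (a b : V) :
    Continuous fun p : V → ℝ × ℝ => edgeVec p a b :=
  continuous_pi fun v => by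
    simp only [edgeVec]
    split_ifs <;> fun_prop

lemma edgeVec_mem_span {p : V → ℝ × ℝ} {F : Set (Sym2 V)} {a b : V} (h : s(a, b) ∈ F) :
    edgeVec p a b ∈ span ℝ (edgeVecs p F) :=
  subset_span ⟨a, b, h, rfl⟩

lemma two_smul_add_edgeVec_of_midpoint {p : V → ℝ × ℝ} {w i j : V}
    (hwi : w ≠ i) (hwj : w ≠ j) (hij : i ≠ j) (hw : p w = midpoint ℝ (p i) (p j)) :
    (2 : ℝ) • (edgeVec p w i + edgeVec p w j) = edgeVec p i j := by
  have h2 : (2 : ℝ) • p w = p i + p j := by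
    rw [hw, midpoint_eq_smul_add, smul_smul]; norm_num
  funext v
  by_cases hvw : v = w
  · subst hvw
    simp only [edgeVec, hwi, hwj, if_true, if_false, Pi.add_apply, Pi.smul_apply]
    linear_combination (norm := module) (2 : ℝ) • h2
  by_cases hvi : v = i
  · subst hvi
    simp only [Pi.smul_apply, Pi.add_apply, edgeVec, hwi.symm, ↓reduceIte, hij, add_zero]
    linear_combination (norm := module) -h2
  by_cases hvj : v = j
  · subst hvj
    simp only [Pi.smul_apply, Pi.add_apply, edgeVec, hwj.symm, ↓reduceIte, hij.symm, zero_add]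
    linear_combination (norm := module) -h2
  simp [edgeVec, hvw, hvi, hvj]

lemma rankOf_update_of_notMem [DecidableEq V] (p : V → ℝ × ℝ) {F : Set (Sym2 V)} {w : V}
    (hF : ∀ e ∈ F, w ∉ e) (x : ℝ × ℝ) :
    rankOf (Function.update p w x) F = rankOf p F := by
  have : edgeVecs (Function.update p w x) F = edgeVecs p F := by
    ext y
    refine exists₂_congr fun a b => and_congr_right fun hab => ?_
    rw [edgeVec_update_of_notMem p x (hF _ hab)]
  rw [rankOf, rankOf, this]

end EdgeVectors

lemma bddAbove_range_rankOf {V : Type*} [Fintype V] (F : Set (Sym2 V)) :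
    BddAbove (Set.range fun p : V → ℝ × ℝ => rankOf p F) :=
  ⟨finrank ℝ (V → ℝ × ℝ), by rintro _ ⟨p, rfl⟩; exact finrank_le _⟩

lemma rankOf_le_genRankSet {V : Type*} [Fintype V] (p : V → ℝ × ℝ) (F : Set (Sym2 V)) :
    rankOf p F ≤ genRankSet F :=
  le_ciSup (bddAbove_range_rankOf F) p

lemma exists_rankOf_eq_genRankSet {V : Type*} [Fintype V] (F : Set (Sym2 V)) :
    ∃ p, rankOf p F = genRankSet F :=
  Nat.sSup_mem (Set.range_nonempty _) (bddAbove_range_rankOf F)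

lemma eventually_rankOf_le {V : Type*} [Fintype V] (p : V → ℝ × ℝ) (F : Set (Sym2 V)) :
    ∀ᶠ q in 𝓝 p, rankOf p F ≤ rankOf q F := by
  obtain ⟨b, hb_sub, hb_span, hb_li⟩ := exists_linearIndependent ℝ (edgeVecs p F)
  have : Fintype b := hb_li.setFinite.fintype
  choose a c hac hx using fun x : b => hb_sub x.2
  have hli : LinearIndependent ℝ fun x : b => edgeVec p (a x) (c x) := by
    simpa [← hx] using hb_li
  have hcont : Continuous fun q : V → ℝ × ℝ => fun x : b => edgeVec q (a x) (c x) :=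
    continuous_pi fun x => continuous_edgeVec (a x) (c x)
  filter_upwards [hcont.continuousAt.eventually hli.eventually] with q hq
  calc rankOf p F = Fintype.card b := by
        rw [rankOf, ← hb_span, finrank_span_set_eq_card hb_li, Set.toFinset_card]
    _ = finrank ℝ (span ℝ (Set.range fun x : b => edgeVec q (a x) (c x))) :=
        (finrank_span_eq_card hq).symm
    _ ≤ rankOf q F :=
        finrank_mono (span_mono (Set.range_subset_iff.2 fun x => ⟨_, _, hac x, rfl⟩))

lemma exists_rankOf_eq_genRankSet_and_cross_ne_zero {V : Type*} [Fintype V] [DecidableEq V]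
    (F : Set (Sym2 V)) {i j k : V} (hij : i ≠ j) (hik : i ≠ k) (hjk : j ≠ k) :
    ∃ p, rankOf p F = genRankSet F ∧ cross (p j - p i) (p k - p i) ≠ 0 := by
  obtain ⟨p₀, hp₀⟩ := exists_rankOf_eq_genRankSet F
  set d : V → ℝ × ℝ := Pi.single j (1, 0) + Pi.single k (0, 1)
  have hd : cross (d j - d i) (d k - d i) ≠ 0 := by
    simp [d, cross, hij, hik, hjk, hjk.symm]
  have hnhds : {t : ℝ | rankOf p₀ F ≤ rankOf (p₀ + t • d) F} ∈ 𝓝 0 :=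
    (Continuous.tendsto' (by fun_prop) 0 p₀ (by simp)).eventually (eventually_rankOf_le p₀ F)
  have hfin : {t : ℝ | cross ((p₀ + t • d) j - (p₀ + t • d) i)
      ((p₀ + t • d) k - (p₀ + t • d) i) = 0}.Finite := by
    have hsub (t : ℝ) (a b : V) :
        (p₀ + t • d) a - (p₀ + t • d) b = p₀ a - p₀ b + t • (d a - d b) := by
      simp only [Pi.add_apply, Pi.smul_apply, smul_sub]; abel
    simpa only [hsub] using finite_setOf_cross_add_smul_eq_zero hd
  obtain ⟨t, hrank, hcross⟩ := ((infinite_of_mem_nhds 0 hnhds).sdiff hfin).nonempty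
  exact ⟨p₀ + t • d, le_antisymm (rankOf_le_genRankSet _ F) (hp₀ ▸ hrank), hcross⟩

def oneExtension {V : Type*} (F : Set (Sym2 V)) (w i j k : V) : Set (Sym2 V) :=
  (F \ {s(i, j)}) ∪ {s(w, i), s(w, j), s(w, k)}

lemma rankOf_add_two_le_rankOf_oneExtension {V : Type*} [Fintype V] {p : V → ℝ × ℝ}
    {F : Set (Sym2 V)} {w i j k : V}
    (hF : ∀ e ∈ F, w ∉ e) (hwi : w ≠ i) (hwj : w ≠ j) (hij : i ≠ j)
    (hw : p w = midpoint ℝ (p i) (p j)) (hcross : cross (p w - p i) (p w - p k) ≠ 0) :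
    rankOf p F + 2 ≤ rankOf p (oneExtension F w i j k) := by
  set M := span ℝ (edgeVecs p (oneExtension F w i j k))
  have hwiM : edgeVec p w i ∈ M := edgeVec_mem_span (Or.inr (by simp))
  have hwjM : edgeVec p w j ∈ M := edgeVec_mem_span (Or.inr (by simp))
  have hwkM : edgeVec p w k ∈ M := edgeVec_mem_span (Or.inr (by simp))
  have hijM : edgeVec p i j ∈ M := by
    rw [← two_smul_add_edgeVec_of_midpoint hwi hwj hij hw]
    exact M.smul_mem _ (M.add_mem hwiM hwjM)
  have hFM : span ℝ (edgeVecs p F) ≤ M := by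
    rw [span_le]
    rintro _ ⟨a, b, hab, rfl⟩
    by_cases he : s(a, b) = s(i, j)
    · rcases Sym2.eq_iff.1 he with ⟨rfl, rfl⟩ | ⟨rfl, rfl⟩
      · exact hijM
      · rwa [edgeVec_comm]
    · exact edgeVec_mem_span (Or.inl ⟨hab, he⟩)
  have hFker : span ℝ (edgeVecs p F) ≤ LinearMap.ker (LinearMap.proj w) := by
    rw [span_le]
    rintro _ ⟨a, b, hab, rfl⟩
    exact edgeVec_apply_of_notMem (hF _ hab)
  have hmap : span ℝ {p w - p i, p w - p k} ≤ M.map (LinearMap.proj w) := by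
    rw [span_le, Set.insert_subset_iff, Set.singleton_subset_iff]
    exact ⟨⟨_, hwiM, by simp [edgeVec]⟩, ⟨_, hwkM, by simp [edgeVec]⟩⟩
  have htwo : finrank ℝ (span ℝ {p w - p i, p w - p k}) = 2 := by
    rw [← Matrix.range_cons_cons_empty, finrank_span_eq_card
      (linearIndependent_pair_of_cross_ne_zero hcross), Fintype.card_fin]
  calc rankOf p F + 2
      ≤ finrank ℝ (span ℝ (edgeVecs p F)) + finrank ℝ (M.map (LinearMap.proj w)) := by
        rw [rankOf, ← htwo]; gcongr; exact finrank_mono hmap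
    _ ≤ finrank ℝ M := finrank_add_finrank_map_le _ hFM hFker

lemma genRankSet_add_two_le_genRankSet_oneExtension {V : Type*} [Fintype V] [DecidableEq V]
    {F : Set (Sym2 V)} {w i j k : V} (hF : ∀ e ∈ F, w ∉ e) (hwi : w ≠ i) (hwj : w ≠ j)
    (hwk : w ≠ k) (hij : i ≠ j) (hik : i ≠ k) (hjk : j ≠ k) :
    genRankSet F + 2 ≤ genRankSet (oneExtension F w i j k) := by
  obtain ⟨p, hp, hcross⟩ := exists_rankOf_eq_genRankSet_and_cross_ne_zero F hij hik hjk
  set p' := Function.update p w (midpoint ℝ (p i) (p j))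
  have hp'w : p' w = midpoint ℝ (p' i) (p' j) := by
    simp [p', Function.update_of_ne hwi.symm, Function.update_of_ne hwj.symm]
  have hcross' : cross (p' w - p' i) (p' w - p' k) ≠ 0 := by
    rw [hp'w, cross_midpoint_sub_midpoint_sub]
    simpa [p', Function.update_of_ne hwi.symm, Function.update_of_ne hwj.symm,
      Function.update_of_ne hwk.symm] using hcross
  calc genRankSet F + 2 = rankOf p' F + 2 := by rw [rankOf_update_of_notMem p hF, hp]
    _ ≤ rankOf p' (oneExtension F w i j k) :=
        rankOf_add_two_le_rankOf_oneExtension hF hwi hwj hij hp'w hcross'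
    _ ≤ genRankSet (oneExtension F w i j k) := rankOf_le_genRankSet _ _

lemma SimpleGraph.neighborSet_eq_of_nat_card_eq_three {V : Type*} {G : SimpleGraph V}
    {w i j k : V} (hi : G.Adj w i) (hj : G.Adj w j) (hk : G.Adj w k)
    (hij : i ≠ j) (hjk : j ≠ k) (hik : i ≠ k) (hdeg : Nat.card (G.neighborSet w) = 3) :
    G.neighborSet w = {i, j, k} := by
  rw [Nat.card_coe_set_eq] at hdeg
  refine (Set.eq_of_subset_of_ncard_le ?_ ?_ (Set.finite_of_ncard_ne_zero (by omega))).symm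
  · rintro _ (rfl | rfl | rfl) <;> assumption
  · rw [hdeg, Set.ncard_eq_three.2 ⟨i, j, k, hij, hik, hjk, rfl⟩]

lemma SimpleGraph.notMem_of_mem_union_singleton_sdiff {V : Type*} {G : SimpleGraph V}
    {w i j k : V} (hN : G.neighborSet w = {i, j, k}) (hwi : w ≠ i) (hwj : w ≠ j) :
    ∀ e ∈ (G.edgeSet ∪ {s(i, j)}) \ {s(w, i), s(w, j), s(w, k)}, w ∉ e := by
  rintro e ⟨he | rfl, hA⟩ hw
  · obtain ⟨b, rfl⟩ := Sym2.mem_iff_exists.1 hw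
    have hb : b ∈ G.neighborSet w := he
    rw [hN] at hb
    rcases hb with rfl | rfl | rfl <;> simp at hA
  · simp [hwi, hwj] at hw

lemma SimpleGraph.edgeSet_fromEdgeSet_union_singleton_sdiff {V : Type*} (G : SimpleGraph V)
    {i j : V} (hij : i ≠ j) (A : Set (Sym2 V)) :
    (SimpleGraph.fromEdgeSet ((G.edgeSet ∪ {s(i, j)}) \ A)).edgeSet =
      (G.edgeSet ∪ {s(i, j)}) \ A := by
  rw [SimpleGraph.edgeSet_fromEdgeSet, sdiff_eq_left, Set.disjoint_left]
  rintro e ⟨he | rfl, -⟩ hd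
  · exact G.not_isDiag_of_mem_edgeSet he hd
  · exact hij (Sym2.mk_isDiag_iff.1 hd)

lemma Set.ncard_union_singleton_sdiff_add_ncard {α : Type*} {E A : Set α} {x : α}
    (hE : E.Finite) (hx : x ∉ E) (hA : A ⊆ E) :
    ((E ∪ {x}) \ A).ncard + A.ncard = E.ncard + 1 := by
  rw [Set.ncard_sdiff_add_ncard_of_subset (hA.trans Set.subset_union_left) (hE.union (toFinite _)),
    Set.union_singleton, Set.ncard_insert_of_notMem hx hE]

lemma oneExtension_union_singleton_sdiff {V : Type*} {E : Set (Sym2 V)} {w i j k : V}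
    (hA : {s(w, i), s(w, j), s(w, k)} ⊆ E) (hij : s(i, j) ∉ E) :
    oneExtension ((E ∪ {s(i, j)}) \ {s(w, i), s(w, j), s(w, k)}) w i j k = E := by
  rw [oneExtension, Set.sdiff_sdiff_comm, Set.union_singleton, Set.insert_sdiff_self_of_notMem hij,
    Set.sdiff_union_of_subset hA]

/-- If `w` is a vertex of degree exactly 3 with incident edges `{w,i}, {w,j}, {w,k}` and
`{i,j} ∉ E`, then for `G' = (V, (E ∪ {{i,j}}) \ {{w,i},{w,j},{w,k}})` we have
`s(G) ≤ s(G')`. -/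
theorem genStress_le_one_extension_three {V : Type*} [Fintype V] (G : SimpleGraph V)
    (w i j k : V) (hi : G.Adj w i) (hj : G.Adj w j) (hk : G.Adj w k)
    (hij : i ≠ j) (hjk : j ≠ k) (hik : i ≠ k)
    (hdeg : Nat.card (G.neighborSet w) = 3)
    (hnadj : ¬ G.Adj i j) :
    genStress G ≤ genStress (SimpleGraph.fromEdgeSet
      ((G.edgeSet ∪ {s(i, j)}) \ {s(w, i), s(w, j), s(w, k)})) := by
  classical
  have hA : {s(w, i), s(w, j), s(w, k)} ⊆ G.edgeSet := by
    rintro _ (rfl | rfl | rfl) <;> assumption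
  have hij' : s(i, j) ∉ G.edgeSet := hnadj
  have hcard := Set.ncard_union_singleton_sdiff_add_ncard (Set.toFinite _) hij' hA
  rw [Set.ncard_eq_three.2 ⟨_, _, _, mt Sym2.congr_right.1 hij, mt Sym2.congr_right.1 hik,
    mt Sym2.congr_right.1 hjk, rfl⟩] at hcard
  have hrank := genRankSet_add_two_le_genRankSet_oneExtension
    (G.notMem_of_mem_union_singleton_sdiff
      (G.neighborSet_eq_of_nat_card_eq_three hi hj hk hij hjk hik hdeg) hi.ne hj.ne)
    hi.ne hj.ne hk.ne hij hik hjk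
  rw [oneExtension_union_singleton_sdiff hA hij'] at hrank
  rw [genStress, genStress, genRank, genRank,
    SimpleGraph.edgeSet_fromEdgeSet_union_singleton_sdiff G hij]
  omega
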